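/- Well-posedness of the local element equilibration problem on the reference tetrahedron: let k ≥ 1 and let u : ℝ³ → ℝ³ be of Raviart–Thomas form D_k with div u = 0 everywhere on ℝ³. Then there exists exactly one vector field H : ℝ³ → ℝ³ of Nédélec form R_k such that curl H = u everywhere on ℝ³ and ∫_{T̂} H · ∇ψ dx = 0 for every real polynomial ψ of total degree at most k in three variables. -/

import Mathlib

open MeasureTheory

/-- Partial derivative of a scalar function on ℝ³ in direction `i`. -/
noncomputable def pd3 (f : (Fin 3 → ℝ) → ℝ) (i : Fin 3) (x : Fin 3 → ℝ) : ℝ :=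
  fderiv ℝ f x (Pi.single i 1)

/-- The curl of a vector field on ℝ³. -/
noncomputable def curl3 (F : (Fin 3 → ℝ) → (Fin 3 → ℝ)) (x : Fin 3 → ℝ) : Fin 3 → ℝ :=
  ![pd3 (fun y => F y 2) 1 x - pd3 (fun y => F y 1) 2 x,
    pd3 (fun y => F y 0) 2 x - pd3 (fun y => F y 2) 0 x,
    pd3 (fun y => F y 1) 0 x - pd3 (fun y => F y 0) 1 x]

/-- The divergence of a vector field on ℝ³. -/
noncomputable def div3 (F : (Fin 3 → ℝ) → (Fin 3 → ℝ)) (x : Fin 3 → ℝ) : ℝ :=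
  ∑ i, pd3 (fun y => F y i) i x

/-- The gradient of a scalar function on ℝ³. -/
noncomputable def grad3 (f : (Fin 3 → ℝ) → ℝ) (x : Fin 3 → ℝ) : Fin 3 → ℝ :=
  fun i => fderiv ℝ f x (Pi.single i 1)

/-- Euclidean dot product on ℝ³. -/
def dot3 (a b : Fin 3 → ℝ) : ℝ := ∑ i, a i * b i

/-- Cross product on ℝ³. -/
def cross3 (a b : Fin 3 → ℝ) : Fin 3 → ℝ :=
  ![a 1 * b 2 - a 2 * b 1, a 2 * b 0 - a 0 * b 2, a 0 * b 1 - a 1 * b 0]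

/-- `f` is (the evaluation of) a real polynomial in three variables of total degree ≤ k. -/
def IsPolyFun3 (k : ℕ) (f : (Fin 3 → ℝ) → ℝ) : Prop :=
  ∃ p : MvPolynomial (Fin 3) ℝ, p.totalDegree ≤ k ∧ ∀ x, f x = MvPolynomial.eval x p

/-- `A` is of Nédélec form `R_k`: `A x = a x + x × b x` with the components of `a, b`
polynomials of total degree at most `k - 1`. -/
def IsNedelec (k : ℕ) (A : (Fin 3 → ℝ) → (Fin 3 → ℝ)) : Prop :=
  ∃ a b : (Fin 3 → ℝ) → (Fin 3 → ℝ),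
    (∀ i, IsPolyFun3 (k - 1) (fun x => a x i)) ∧
    (∀ i, IsPolyFun3 (k - 1) (fun x => b x i)) ∧
    ∀ x, A x = a x + cross3 x (b x)

/-- `u` is of Raviart–Thomas form `D_k`: `u x = v x + (w x) • x` with the components of `v`
and the scalar `w` polynomials of total degree at most `k - 1`. -/
def IsRT (k : ℕ) (u : (Fin 3 → ℝ) → (Fin 3 → ℝ)) : Prop :=
  ∃ (v : (Fin 3 → ℝ) → (Fin 3 → ℝ)) (w : (Fin 3 → ℝ) → ℝ),
    (∀ i, IsPolyFun3 (k - 1) (fun x => v x i)) ∧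
    IsPolyFun3 (k - 1) w ∧
    ∀ x, u x = v x + w x • x

/-- The standard reference tetrahedron in ℝ³. -/
def refTet : Set (Fin 3 → ℝ) := {x | (∀ i, 0 ≤ x i) ∧ ∑ i, x i ≤ 1}

/-!
Everything is polynomial, so the argument is algebraic plus one analytic fact. Euler's identity
gives, for fields homogeneous of degree `m`, `curl (x × q) = -(m + 2) q` when `div q = 0` and
`∇ (x · A) = (m + 1) A` when `curl A = 0`. Summing over homogeneous components, the divergence-free
field `u = v + w x` equals `curl (x × b)` with `b` built from `v` alone (as `x × (w x) = 0`), so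
`x × b ∈ R_k`; subtracting its `L²(T̂)`-orthogonal projection onto the finite-dimensional space
`∇ P_k` gives existence. Conversely a curl-free `A ∈ R_k` is `∇ φ` with `φ` built from
`x · A = x · a ∈ P_k`, so orthogonality to `∇ P_k` forces `∫_{T̂} |A|² = 0`, and a polynomial
vanishing on an open ball inside `T̂` is zero.
-/

namespace MvPolynomial

open Finset

section Homogeneous

variable {σ R : Type*} [CommSemiring R]

theorem homogeneousComponent_pderiv (n : ℕ) (i : σ) (p : MvPolynomial σ R) :
    homogeneousComponent n (pderiv i p) = pderiv i (homogeneousComponent (n + 1) p) := by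
  induction p using MvPolynomial.induction_on' with
  | monomial d c =>
    have hd : (pderiv i (monomial d c)).IsHomogeneous (d.degree - 1) :=
      (isHomogeneous_monomial c rfl).pderiv
    rw [homogeneousComponent_of_mem hd, homogeneousComponent_of_mem (isHomogeneous_monomial c rfl)]
    rcases Nat.eq_zero_or_pos d.degree with h0 | hpos
    · have : pderiv i (monomial d c) = 0 := by
        rw [(Finsupp.degree_eq_zero_iff d).1 h0, monomial_zero', pderiv_C]
      split_ifs <;> simp only [this, map_zero]
    · split_ifs <;> first | omega | simp
  | add p q hp hq => simp only [map_add, hp, hq]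

theorem homogeneousComponent_succ_X_mul (n : ℕ) (i : σ) (p : MvPolynomial σ R) :
    homogeneousComponent (n + 1) (X i * p) = X i * homogeneousComponent n p := by
  induction p using MvPolynomial.induction_on' with
  | monomial d c =>
    have hd : (X i * monomial d c).IsHomogeneous (d.degree + 1) := by
      simpa [add_comm] using (isHomogeneous_X R i).mul (isHomogeneous_monomial c rfl)
    rw [homogeneousComponent_of_mem hd, homogeneousComponent_of_mem (isHomogeneous_monomial c rfl)]
    split_ifs <;> first | omega | simp
  | add p q hp hq => simp only [mul_add, map_add, hp, hq]

theorem sum_range_homogeneousComponent {N : ℕ} {p : MvPolynomial σ R} (hp : p.totalDegree < N) :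
    ∑ m ∈ range N, homogeneousComponent m p = p := by
  rw [← sum_subset (range_subset_range.2 hp) fun m _ hm =>
    homogeneousComponent_eq_zero m p (by simpa using hm), sum_homogeneousComponent]

theorem homogeneousComponent_mem_restrictTotalDegree {d : ℕ} (m : ℕ) {p : MvPolynomial σ R}
    (hp : p ∈ restrictTotalDegree σ R d) :
    homogeneousComponent m p ∈ restrictTotalDegree σ R d := by
  rw [mem_restrictTotalDegree] at hp ⊢
  by_cases hm : m ≤ p.totalDegree
  · exact (homogeneousComponent_isHomogeneous m p).totalDegree_le.trans (hm.trans hp)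
  · simp [homogeneousComponent_eq_zero m p (not_le.1 hm)]

theorem totalDegree_pderiv_le (i : σ) (p : MvPolynomial σ R) :
    (pderiv i p).totalDegree ≤ p.totalDegree - 1 := by
  classical
  refine Finset.sup_le fun m hm => ?_
  rw [mem_support_iff, coeff_pderiv] at hm
  have := le_totalDegree (mem_support_iff.2 (left_ne_zero_of_mul hm))
  change (m + Finsupp.single i 1).degree ≤ _ at this
  rw [map_add, Finsupp.degree_single] at this
  change m.degree ≤ _
  omega

theorem pderiv_mem_restrictTotalDegree {d : ℕ} (i : σ) {p : MvPolynomial σ R}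
    (hp : p ∈ restrictTotalDegree σ R d) : pderiv i p ∈ restrictTotalDegree σ R (d - 1) := by
  rw [mem_restrictTotalDegree] at hp ⊢
  exact (totalDegree_pderiv_le i p).trans (Nat.sub_le_sub_right hp 1)

theorem pderiv_pderiv_comm (i j : σ) (p : MvPolynomial σ R) :
    pderiv i (pderiv j p) = pderiv j (pderiv i p) := by
  classical
  induction p using MvPolynomial.induction_on with
  | C a => simp
  | add p q hp hq => simp only [map_add, hp, hq]
  | mul_X p k hp =>
    simp only [pderiv_mul, map_add, pderiv_X, hp, Pi.single_apply]
    split_ifs <;> simp [add_comm, add_left_comm]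

end Homogeneous

section Analysis

variable {σ : Type*} [Fintype σ]

theorem hasFDerivAt_eval (p : MvPolynomial σ ℝ) (x : σ → ℝ) :
    HasFDerivAt (fun y => eval y p)
      (∑ j, eval x (pderiv j p) • ContinuousLinearMap.proj j : (σ → ℝ) →L[ℝ] ℝ) x := by
  classical
  induction p using MvPolynomial.induction_on with
  | C a => simpa using hasFDerivAt_const a x
  | add p q hp hq =>
    simp only [map_add]
    exact (hp.fun_add hq).congr_fderiv (by simp only [add_smul, sum_add_distrib])
  | mul_X p i hp =>
    have h := hp.fun_mul (ContinuousLinearMap.proj i : (σ → ℝ) →L[ℝ] ℝ).hasFDerivAt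
    simp only [eval_mul, eval_X]
    refine h.congr_fderiv ?_
    ext v
    simp [pderiv_X, Pi.single_apply, apply_ite (eval x), add_mul, sum_add_distrib,
      ite_mul, mul_sum, mul_assoc]

theorem fderiv_eval_single [DecidableEq σ] (p : MvPolynomial σ ℝ) (x : σ → ℝ) (i : σ) :
    fderiv ℝ (fun y => eval y p) x (Pi.single i 1) = eval x (pderiv i p) := by
  simp [(hasFDerivAt_eval p x).fderiv, Pi.single_apply]

theorem eq_zero_of_eqOn_zero {p : MvPolynomial σ ℝ} {U : Set (σ → ℝ)}
    (hU : IsOpen U) (hne : U.Nonempty) (h : Set.EqOn (fun y => eval y p) 0 U) : p = 0 := by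
  obtain ⟨z, hz⟩ := hne
  have hz : (fun y => eval y p) =ᶠ[nhds z] 0 := Filter.mem_of_superset (hU.mem_nhds hz) h
  have := (AnalyticOnNhd.eval_mvPolynomial p).eq_of_eventuallyEq analyticOnNhd_const hz
  exact funext fun x => by rw [map_zero]; exact congrFun this x

end Analysis

end MvPolynomial

theorem LinearMap.BilinForm.exists_mem_forall_apply_sub_eq_zero {K V : Type*} [Field K]
    [AddCommGroup V] [Module K V] {B : LinearMap.BilinForm K V} (hB : ∀ x, B x x = 0 → x = 0)
    (W : Submodule K V) [FiniteDimensional K W] (v : V) :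
    ∃ w ∈ W, ∀ y ∈ W, B (v - w) y = 0 := by
  have hW : (B.restrict W).Nondegenerate :=
    ⟨fun x hx => Subtype.ext (hB x (hx x)), fun y hy => Subtype.ext (hB y (hy y))⟩
  refine ⟨((B.restrict W).toDual hW).symm ((B v).domRestrict W), Submodule.coe_mem _,
    fun y hy => ?_⟩
  have := LinearMap.BilinForm.apply_toDual_symm_apply (hB := hW) ((B v).domRestrict W) ⟨y, hy⟩
  simp only [LinearMap.BilinForm.restrict_apply, LinearMap.domRestrict_apply] at this
  rw [map_sub, LinearMap.sub_apply, this, sub_self]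

abbrev PolyVec (R : Type*) [CommRing R] := Fin 3 → MvPolynomial (Fin 3) R

noncomputable section

namespace PolyVec

open MvPolynomial Finset Matrix

variable {R : Type*} [CommRing R]

def position : PolyVec R := fun i => X i

def curl : PolyVec R →ₗ[R] PolyVec R where
  toFun q := ![pderiv 1 (q 2) - pderiv 2 (q 1), pderiv 2 (q 0) - pderiv 0 (q 2),
    pderiv 0 (q 1) - pderiv 1 (q 0)]
  map_add' p q := by ext i : 1; fin_cases i <;> simp <;> abel
  map_smul' c q := by ext i : 1; fin_cases i <;> simp [smul_sub]

def div : PolyVec R →ₗ[R] MvPolynomial (Fin 3) R :=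
  ∑ i, (pderiv i).toLinearMap ∘ₗ LinearMap.proj i

def grad : MvPolynomial (Fin 3) R →ₗ[R] PolyVec R :=
  LinearMap.pi fun i => (pderiv i).toLinearMap

def homComponent (m : ℕ) : PolyVec R →ₗ[R] PolyVec R :=
  (homogeneousComponent m).compLeft (Fin 3)

theorem curl_apply (q : PolyVec R) : curl q = ![pderiv 1 (q 2) - pderiv 2 (q 1),
    pderiv 2 (q 0) - pderiv 0 (q 2), pderiv 0 (q 1) - pderiv 1 (q 0)] := rfl

theorem div_apply (q : PolyVec R) : div q = ∑ i, pderiv i (q i) := by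
  simp [div]

theorem grad_apply (φ : MvPolynomial (Fin 3) R) (i : Fin 3) : grad φ i = pderiv i φ := rfl

theorem homComponent_apply (m : ℕ) (q : PolyVec R) (i : Fin 3) :
    homComponent m q i = homogeneousComponent m (q i) := rfl

theorem curl_grad (φ : MvPolynomial (Fin 3) R) : curl (grad φ) = 0 := by
  ext i : 1
  fin_cases i <;> simp [curl_apply, grad_apply, pderiv_pderiv_comm]

theorem curl_position_cross_of_isHomogeneous {m : ℕ} {q : PolyVec R}
    (hq : ∀ i, (q i).IsHomogeneous m) (hdiv : div q = 0) :
    curl (position ⨯₃ q) = -((m : R) + 2) • q := by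
  have euler := fun i => (hq i).sum_X_mul_pderiv
  simp only [Fin.sum_univ_three, nsmul_eq_mul] at euler
  rw [div_apply, Fin.sum_univ_three] at hdiv
  ext i : 1
  fin_cases i <;>
    simp [curl_apply, cross_apply, position, pderiv_X, smul_eq_C_mul, map_ofNat]
  · linear_combination X 0 * hdiv - euler 0
  · linear_combination X 1 * hdiv - euler 1
  · linear_combination X 2 * hdiv - euler 2

theorem grad_position_dot_of_isHomogeneous {m : ℕ} {A : PolyVec R}
    (hA : ∀ i, (A i).IsHomogeneous m) (hcurl : curl A = 0) :
    grad (position ⬝ᵥ A) = ((m : R) + 1) • A := by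
  have euler := fun i => (hA i).sum_X_mul_pderiv
  simp only [Fin.sum_univ_three, nsmul_eq_mul] at euler
  obtain ⟨h12, h20, h01⟩ : pderiv 1 (A 2) - pderiv 2 (A 1) = 0 ∧
      pderiv 2 (A 0) - pderiv 0 (A 2) = 0 ∧ pderiv 0 (A 1) - pderiv 1 (A 0) = 0 :=
    ⟨congrFun hcurl 0, congrFun hcurl 1, congrFun hcurl 2⟩
  ext i : 1
  fin_cases i <;>
    simp [grad_apply, dotProduct, Fin.sum_univ_three, position, pderiv_X, smul_eq_C_mul]
  · linear_combination euler 0 + X 1 * h01 - X 2 * h20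
  · linear_combination euler 1 - X 0 * h01 + X 2 * h12
  · linear_combination euler 2 + X 0 * h20 - X 1 * h12

theorem position_cross_homComponent (m : ℕ) (q : PolyVec R) :
    position ⨯₃ homComponent m q = homComponent (m + 1) (position ⨯₃ q) := by
  ext i : 1
  fin_cases i <;>
    simp [cross_apply, homComponent_apply, position, homogeneousComponent_succ_X_mul]

theorem position_dot_homComponent (m : ℕ) (A : PolyVec R) :
    position ⬝ᵥ homComponent m A = homogeneousComponent (m + 1) (position ⬝ᵥ A) := by
  simp [dotProduct, homComponent_apply, position, homogeneousComponent_succ_X_mul]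

theorem div_homComponent_eq_zero {q : PolyVec R} (hdiv : div q = 0) (m : ℕ) :
    div (homComponent m q) = 0 := by
  rcases m with _ | m
  · simp [div_apply, homComponent_apply]
  · rw [div_apply] at hdiv
    simp [div_apply, homComponent_apply, ← homogeneousComponent_pderiv, ← map_sum, hdiv]

theorem curl_homComponent_eq_zero {A : PolyVec R} (hcurl : curl A = 0) (m : ℕ) :
    curl (homComponent m A) = 0 := by
  rcases m with _ | m
  · ext i : 1; fin_cases i <;> simp [curl_apply, homComponent_apply]
  · ext i : 1
    have := congrFun hcurl i
    fin_cases i <;>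
      simp_all [curl_apply, homComponent_apply, ← homogeneousComponent_pderiv, ← map_sub]

theorem sum_homComponent {N : ℕ} {q : PolyVec R} (hN : ∀ i, (q i).totalDegree < N) :
    ∑ m ∈ range N, homComponent m q = q := by
  ext i : 1
  simp [homComponent_apply, sum_range_homogeneousComponent (hN i)]

section Degree

def degreeLE (d : ℕ) : Submodule R (PolyVec R) :=
  Submodule.pi Set.univ fun _ => restrictTotalDegree (Fin 3) R d

theorem mem_degreeLE {d : ℕ} {q : PolyVec R} :
    q ∈ degreeLE d ↔ ∀ i, q i ∈ restrictTotalDegree (Fin 3) R d := by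
  simp [degreeLE]

theorem homComponent_mem_degreeLE {d : ℕ} (m : ℕ) {q : PolyVec R} (hq : q ∈ degreeLE d) :
    homComponent m q ∈ degreeLE d :=
  mem_degreeLE.2 fun i => homogeneousComponent_mem_restrictTotalDegree m (mem_degreeLE.1 hq i)

theorem grad_mem_degreeLE {d : ℕ} {φ : MvPolynomial (Fin 3) R}
    (hφ : φ ∈ restrictTotalDegree (Fin 3) R d) : grad φ ∈ degreeLE (d - 1) :=
  mem_degreeLE.2 fun i => pderiv_mem_restrictTotalDegree i hφ

/-- The polynomial Nédélec space `R_k = P_{k-1}³ + x × P_{k-1}³`. -/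
def nedelec (k : ℕ) : Submodule R (PolyVec R) :=
  degreeLE (k - 1) ⊔ (degreeLE (k - 1)).map ((crossProduct position).restrictScalars R)

theorem mem_nedelec {k : ℕ} {P : PolyVec R} :
    P ∈ nedelec k ↔ ∃ a ∈ degreeLE (k - 1), ∃ b ∈ degreeLE (k - 1), a + position ⨯₃ b = P := by
  simp [nedelec, Submodule.mem_sup]

theorem position_dot_mem_of_mem_nedelec {k : ℕ} (hk : 1 ≤ k) {P : PolyVec R}
    (hP : P ∈ nedelec k) : position ⬝ᵥ P ∈ restrictTotalDegree (Fin 3) R k := by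
  obtain ⟨a, ha, b, -, rfl⟩ := mem_nedelec.1 hP
  rw [dotProduct_add, dot_self_cross, add_zero, dotProduct]
  refine Submodule.sum_mem _ fun i _ => ?_
  rw [mem_restrictTotalDegree]
  have := (mem_restrictTotalDegree _ _ _).1 (mem_degreeLE.1 ha i)
  calc (position i * a i).totalDegree
      ≤ (X i : MvPolynomial (Fin 3) R).totalDegree + (a i).totalDegree := totalDegree_mul _ _
    _ ≤ k := by
        have hX := totalDegree_monomial_le (Finsupp.single i 1) (1 : R)
        rw [Finsupp.sum_single_index rfl, id, ← X] at hX
        omega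

theorem exists_totalDegree_lt (q : PolyVec R) :
    ∃ N, ∀ i, (q i).totalDegree < N :=
  ⟨∑ i, (q i).totalDegree + 1, fun i =>
    Nat.lt_succ_of_le (single_le_sum (f := fun i => (q i).totalDegree) (fun _ _ => Nat.zero_le _)
      (mem_univ i))⟩

end Degree

section Koszul

variable {K : Type*} [Field K]

def koszulCurl (N : ℕ) : PolyVec K →ₗ[K] PolyVec K :=
  ∑ m ∈ range N, (-((m : K) + 2)⁻¹) • homComponent m

def koszulGrad (N : ℕ) (A : PolyVec K) : MvPolynomial (Fin 3) K :=
  ∑ m ∈ range N, ((m : K) + 1)⁻¹ • (position ⬝ᵥ homComponent m A)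

theorem curl_position_cross_koszulCurl [CharZero K] {N : ℕ} {q : PolyVec K} (hdiv : div q = 0)
    (hN : ∀ i, (q i).totalDegree < N) : curl (position ⨯₃ koszulCurl N q) = q := by
  calc curl (position ⨯₃ koszulCurl N q)
      = ∑ m ∈ range N, (-((m : K) + 2)⁻¹) • curl (position ⨯₃ homComponent m q) := by
        simp [koszulCurl, map_sum]
    _ = ∑ m ∈ range N, homComponent m q := by
        refine sum_congr rfl fun m _ => ?_
        rw [curl_position_cross_of_isHomogeneous (q := homComponent m q)
          (fun i => homogeneousComponent_isHomogeneous m (q i))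
          (div_homComponent_eq_zero hdiv m), smul_smul, neg_mul_neg,
          inv_mul_cancel₀ (by exact_mod_cast (m + 1).succ_ne_zero),
          one_smul]
    _ = q := sum_homComponent hN

theorem position_cross_koszulCurl_smul_position (N : ℕ) (w : MvPolynomial (Fin 3) K) :
    (position : PolyVec K) ⨯₃ koszulCurl N (w • position) = 0 := by
  simp only [koszulCurl, LinearMap.sum_apply, LinearMap.smul_apply, map_sum,
    LinearMap.map_smul_of_tower, position_cross_homComponent, cross_self, smul_zero,
    map_zero, sum_const_zero]

theorem grad_koszulGrad [CharZero K] {N : ℕ} {A : PolyVec K} (hcurl : curl A = 0)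
    (hN : ∀ i, (A i).totalDegree < N) : grad (koszulGrad N A) = A := by
  calc grad (koszulGrad N A)
      = ∑ m ∈ range N, ((m : K) + 1)⁻¹ • grad (position ⬝ᵥ homComponent m A) := by
        simp [koszulGrad, map_sum]
    _ = ∑ m ∈ range N, homComponent m A := by
        refine sum_congr rfl fun m _ => ?_
        rw [grad_position_dot_of_isHomogeneous (A := homComponent m A)
          (fun i => homogeneousComponent_isHomogeneous m (A i))
          (curl_homComponent_eq_zero hcurl m), smul_smul,
          inv_mul_cancel₀ (by exact_mod_cast m.succ_ne_zero), one_smul]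
    _ = A := sum_homComponent hN

theorem koszulCurl_mem_degreeLE {d : ℕ} (N : ℕ) {q : PolyVec K} (hq : q ∈ degreeLE d) :
    koszulCurl N q ∈ degreeLE d := by
  simp only [koszulCurl, LinearMap.sum_apply, LinearMap.smul_apply]
  exact Submodule.sum_mem _ fun m _ => Submodule.smul_mem _ _ (homComponent_mem_degreeLE m hq)

theorem koszulGrad_mem_restrictTotalDegree {d : ℕ} (N : ℕ) {A : PolyVec K}
    (hA : position ⬝ᵥ A ∈ restrictTotalDegree (Fin 3) K d) :
    koszulGrad N A ∈ restrictTotalDegree (Fin 3) K d := by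
  simp only [koszulGrad, position_dot_homComponent]
  exact Submodule.sum_mem _ fun m _ =>
    Submodule.smul_mem _ _ (homogeneousComponent_mem_restrictTotalDegree _ hA)

end Koszul

end PolyVec

open MvPolynomial Matrix PolyVec Finset

theorem refTet_subset_Icc : refTet ⊆ Set.Icc 0 1 := by
  rintro x ⟨h0, h1⟩
  exact ⟨h0, fun i => (single_le_sum (fun j _ => h0 j) (mem_univ i)).trans h1⟩

theorem ball_subset_refTet : Metric.ball (fun _ => 1 / 8) (1 / 8) ⊆ refTet := by
  intro x hx
  rw [Metric.mem_ball, dist_pi_lt_iff (by norm_num)] at hx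
  have hx : ∀ i, 0 < x i ∧ x i < 1 / 4 := fun i => by
    have := abs_lt.1 (Real.dist_eq _ _ ▸ hx i)
    constructor <;> linarith [this.1, this.2]
  refine ⟨fun i => (hx i).1.le, ?_⟩
  rw [Fin.sum_univ_three]
  linarith [(hx 0).2, (hx 1).2, (hx 2).2]

theorem integrableOn_refTet_eval (p : MvPolynomial (Fin 3) ℝ) :
    IntegrableOn (fun x => eval x p) refTet :=
  ((continuous_eval p).continuousOn.integrableOn_compact isCompact_Icc).mono_set
    refTet_subset_Icc

def tetIntegral : MvPolynomial (Fin 3) ℝ →ₗ[ℝ] ℝ where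
  toFun p := ∫ x in refTet, eval x p
  map_add' p q := by
    simp only [map_add]
    exact integral_add (integrableOn_refTet_eval p) (integrableOn_refTet_eval q)
  map_smul' c p := by
    simp only [smul_eval, RingHom.id_apply, smul_eq_mul]
    exact integral_const_mul c _

def l2Tet : LinearMap.BilinForm ℝ (PolyVec ℝ) :=
  LinearMap.mk₂ ℝ (fun P Q => tetIntegral (P ⬝ᵥ Q))
    (fun _ _ _ => by rw [add_dotProduct, map_add])
    (fun _ _ _ => by rw [smul_dotProduct, map_smul, smul_eq_mul])
    (fun _ _ _ => by rw [dotProduct_add, map_add])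
    (fun _ _ _ => by rw [dotProduct_smul, map_smul, smul_eq_mul])

theorem l2Tet_apply (P Q : PolyVec ℝ) : l2Tet P Q = ∫ x in refTet, eval x (P ⬝ᵥ Q) := rfl

theorem eval_dotProduct_self_nonneg (P : PolyVec ℝ) (x : Fin 3 → ℝ) : 0 ≤ eval x (P ⬝ᵥ P) := by
  simp only [dotProduct, map_sum, map_mul]
  exact sum_nonneg fun i _ => mul_self_nonneg _

theorem eq_zero_of_l2Tet_self_eq_zero {P : PolyVec ℝ} (h : l2Tet P P = 0) : P = 0 := by
  have hcont : Continuous fun x => eval x (P ⬝ᵥ P) := continuous_eval _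
  have hae : (fun x => eval x (P ⬝ᵥ P)) =ᵐ[volume.restrict refTet] 0 :=
    (setIntegral_eq_zero_iff_of_nonneg_ae (Filter.Eventually.of_forall
      (eval_dotProduct_self_nonneg P)) (integrableOn_refTet_eval _)).1 h
  have hdot : P ⬝ᵥ P = 0 := eq_zero_of_eqOn_zero Metric.isOpen_ball
    ⟨_, Metric.mem_ball_self (by norm_num)⟩
    (Measure.eqOn_open_of_ae_eq (ae_restrict_of_ae_restrict_of_subset ball_subset_refTet hae)
      Metric.isOpen_ball hcont.continuousOn continuousOn_const)
  ext1 i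
  refine MvPolynomial.funext fun x => ?_
  have hx := congrArg (eval x) hdot
  simp only [dotProduct, map_sum, map_mul, map_zero] at hx
  rw [sum_eq_zero_iff_of_nonneg fun j _ => mul_self_nonneg _] at hx
  simpa using hx i (mem_univ i)

def evalVec (P : PolyVec ℝ) (x : Fin 3 → ℝ) : Fin 3 → ℝ := fun i => eval x (P i)

theorem evalVec_injective : Function.Injective evalVec := fun _ _ h =>
  funext fun i => MvPolynomial.funext fun x => congrFun (congrFun h x) i

theorem evalVec_add (P Q : PolyVec ℝ) : evalVec (P + Q) = evalVec P + evalVec Q := by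
  ext x i; simp [evalVec]

theorem evalVec_position_cross (P : PolyVec ℝ) (x : Fin 3 → ℝ) :
    evalVec (position ⨯₃ P) x = cross3 x (evalVec P x) := by
  ext i; fin_cases i <;> simp [evalVec, cross3, cross_apply, position]

theorem evalVec_smul_position (w : MvPolynomial (Fin 3) ℝ) (x : Fin 3 → ℝ) :
    evalVec (w • position) x = eval x w • x := by
  ext i; simp [evalVec, position]

theorem pd3_eval (p : MvPolynomial (Fin 3) ℝ) (i : Fin 3) (x : Fin 3 → ℝ) :
    pd3 (fun y => eval y p) i x = eval x (pderiv i p) :=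
  fderiv_eval_single p x i

theorem curl3_evalVec (P : PolyVec ℝ) : curl3 (evalVec P) = evalVec (curl P) := by
  ext x i; fin_cases i <;> simp [curl3, evalVec, curl_apply, pd3_eval]

theorem div3_evalVec (P : PolyVec ℝ) (x : Fin 3 → ℝ) : div3 (evalVec P) x = eval x (div P) := by
  simp [div3, evalVec, div_apply, pd3_eval]

theorem grad3_eval (ψ : MvPolynomial (Fin 3) ℝ) : grad3 (fun y => eval y ψ) = evalVec (grad ψ) := by
  ext x i; exact fderiv_eval_single ψ x i

theorem setIntegral_dot3_evalVec (P Q : PolyVec ℝ) :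
    ∫ x in refTet, dot3 (evalVec P x) (evalVec Q x) = l2Tet P Q := by
  simp [l2Tet_apply, dot3, evalVec, dotProduct]

theorem forall_isPolyFun3_iff {d : ℕ} {a : (Fin 3 → ℝ) → Fin 3 → ℝ} :
    (∀ i, IsPolyFun3 d fun x => a x i) ↔ ∃ A ∈ degreeLE d, a = evalVec A := by
  constructor
  · intro ha
    choose A hA hAa using ha
    exact ⟨A, mem_degreeLE.2 fun i => (mem_restrictTotalDegree _ _ _).2 (hA i),
      funext fun x => funext fun i => hAa i x⟩
  · rintro ⟨A, hA, rfl⟩ i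
    exact ⟨A i, (mem_restrictTotalDegree _ _ _).1 (mem_degreeLE.1 hA i), fun x => rfl⟩

theorem IsRT.exists_eq_evalVec {k : ℕ} {u : (Fin 3 → ℝ) → Fin 3 → ℝ} (hu : IsRT k u) :
    ∃ v ∈ degreeLE (k - 1), ∃ w : MvPolynomial (Fin 3) ℝ, u = evalVec (v + w • position) := by
  obtain ⟨v, w, hv, ⟨w', -, hw'⟩, hu⟩ := hu
  obtain ⟨V, hV, rfl⟩ := forall_isPolyFun3_iff.1 hv
  refine ⟨V, hV, w', funext fun x => ?_⟩
  rw [hu, evalVec_add, Pi.add_apply, evalVec_smul_position, hw']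

theorem isNedelec_iff {k : ℕ} {H : (Fin 3 → ℝ) → Fin 3 → ℝ} :
    IsNedelec k H ↔ ∃ P ∈ nedelec k, H = evalVec P := by
  constructor
  · rintro ⟨a, b, ha, hb, hH⟩
    obtain ⟨A, hA, rfl⟩ := forall_isPolyFun3_iff.1 ha
    obtain ⟨B, hB, rfl⟩ := forall_isPolyFun3_iff.1 hb
    refine ⟨A + position ⨯₃ B, mem_nedelec.2 ⟨A, hA, B, hB, rfl⟩, funext fun x => ?_⟩
    rw [hH, evalVec_add, Pi.add_apply, evalVec_position_cross]
  · rintro ⟨P, hP, rfl⟩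
    obtain ⟨A, hA, B, hB, rfl⟩ := mem_nedelec.1 hP
    refine ⟨evalVec A, evalVec B, forall_isPolyFun3_iff.2 ⟨A, hA, rfl⟩,
      forall_isPolyFun3_iff.2 ⟨B, hB, rfl⟩, fun x => ?_⟩
    rw [evalVec_add, Pi.add_apply, evalVec_position_cross]

theorem setIntegral_dot3_grad3_eval (P : PolyVec ℝ) (ψ : MvPolynomial (Fin 3) ℝ) :
    ∫ x in refTet, dot3 (evalVec P x) (grad3 (fun y => eval y ψ) x) = l2Tet P (grad ψ) := by
  rw [grad3_eval, setIntegral_dot3_evalVec]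

theorem eq_zero_of_mem_nedelec_of_curl_eq_zero {k : ℕ} (hk : 1 ≤ k) {P : PolyVec ℝ}
    (hP : P ∈ nedelec k) (hcurl : curl P = 0)
    (horth : ∀ ψ ∈ restrictTotalDegree (Fin 3) ℝ k, l2Tet P (grad ψ) = 0) :
    P = 0 := by
  obtain ⟨N, hN⟩ := exists_totalDegree_lt P
  apply eq_zero_of_l2Tet_self_eq_zero
  calc l2Tet P P = l2Tet P (grad (koszulGrad N P)) := by rw [grad_koszulGrad hcurl hN]
    _ = 0 := horth _ (koszulGrad_mem_restrictTotalDegree N (position_dot_mem_of_mem_nedelec hk hP))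

theorem exists_mem_nedelec_curl_eq_and_orthogonal {k : ℕ} {v : PolyVec ℝ}
    (hv : v ∈ degreeLE (k - 1)) (w : MvPolynomial (Fin 3) ℝ) (hdiv : div (v + w • position) = 0) :
    ∃ P ∈ nedelec k, curl P = v + w • position ∧
      ∀ ψ ∈ restrictTotalDegree (Fin 3) ℝ k, l2Tet P (grad ψ) = 0 := by
  obtain ⟨N, hN⟩ := exists_totalDegree_lt (v + w • position)
  have hcurl : curl (position ⨯₃ koszulCurl N v) = v + w • position := by
    rw [← curl_position_cross_koszulCurl hdiv hN, map_add, map_add,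
      position_cross_koszulCurl_smul_position, add_zero]
  obtain ⟨g, hg, horth⟩ := l2Tet.exists_mem_forall_apply_sub_eq_zero
    (fun _ => eq_zero_of_l2Tet_self_eq_zero) ((restrictTotalDegree (Fin 3) ℝ k).map grad)
    (position ⨯₃ koszulCurl N v)
  obtain ⟨φ, hφ, rfl⟩ := Submodule.mem_map.1 hg
  refine ⟨position ⨯₃ koszulCurl N v - grad φ, sub_mem ?_ ?_,
    by rw [map_sub, hcurl, curl_grad, sub_zero], fun ψ hψ => horth _ (Submodule.mem_map_of_mem hψ)⟩
  · exact Submodule.mem_sup_right (Submodule.mem_map_of_mem (koszulCurl_mem_degreeLE N hv))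
  · exact Submodule.mem_sup_left (grad_mem_degreeLE hφ)

end

theorem local_element_equilibration_wellposed (k : ℕ) (hk : 1 ≤ k)
    (u : (Fin 3 → ℝ) → (Fin 3 → ℝ)) (hu : IsRT k u)
    (hdiv : ∀ x, div3 u x = 0) :
    ∃! H : (Fin 3 → ℝ) → (Fin 3 → ℝ),
      IsNedelec k H ∧ (∀ x, curl3 H x = u x) ∧
      ∀ ψ : MvPolynomial (Fin 3) ℝ, ψ.totalDegree ≤ k →
        ∫ x in refTet, dot3 (H x) (grad3 (fun y => MvPolynomial.eval y ψ) x) = 0 := by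
  obtain ⟨v, hv, w, rfl⟩ := hu.exists_eq_evalVec
  have hdiv : PolyVec.div (v + w • PolyVec.position) = 0 :=
    MvPolynomial.funext fun x => by simpa [div3_evalVec] using hdiv x
  obtain ⟨P, hP, hcurl, horth⟩ := exists_mem_nedelec_curl_eq_and_orthogonal hv w hdiv
  refine ⟨evalVec P, ⟨isNedelec_iff.2 ⟨P, hP, rfl⟩, fun x => by rw [curl3_evalVec, hcurl],
    fun ψ hψ => ?_⟩, ?_⟩
  · rw [setIntegral_dot3_grad3_eval]
    exact horth ψ ((MvPolynomial.mem_restrictTotalDegree _ _ _).2 hψ)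
  rintro _ ⟨hH, hcurlH, horthH⟩
  obtain ⟨Q, hQ, rfl⟩ := isNedelec_iff.1 hH
  have hcurlQ : PolyVec.curl Q = v + w • PolyVec.position :=
    evalVec_injective (by rw [← curl3_evalVec]; exact funext hcurlH)
  have hQP := eq_zero_of_mem_nedelec_of_curl_eq_zero hk (sub_mem hQ hP)
    (by rw [map_sub, hcurl, hcurlQ, sub_self]) fun ψ hψ => by
      rw [map_sub, LinearMap.sub_apply, ← setIntegral_dot3_grad3_eval,
        ← setIntegral_dot3_grad3_eval, horthH ψ ((MvPolynomial.mem_restrictTotalDegree _ _ _).1 hψ),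
        setIntegral_dot3_grad3_eval, horth ψ hψ, sub_zero]
  rw [sub_eq_zero.1 hQP]
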